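/- Let f be a piecewise contracting interval map on X with N contraction pieces, satisfying the separation property and D ⊂ X̃. Let n₀ ≥ 1 be such that every atom of generation n₀ or higher contains at most one point of Δ. Then for every n ≥ 1, #𝒜_{n+n₀} − #𝒜_{n₀} ≤ n(N−1). -/

import Mathlib

open Set Filter Metric Topology

/-- A piecewise contracting interval map (PCIM) on the compact interval `X = [a,b]`:
there are `N ≥ 1` pairwise disjoint nonempty open (relative to `X`) subintervals
whose closures cover `X`, and `f` contracts with rate `lam ∈ (0,1)` on each piece. -/
structure PCIM where
  a : ℝ
  b : ℝ
  hab : a < b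
  N : ℕ
  hN : 1 ≤ N
  f : ℝ → ℝ
  lam : ℝ
  hlam₀ : 0 < lam
  hlam₁ : lam < 1
  piece : Fin N → Set ℝ
  piece_nonempty : ∀ i, (piece i).Nonempty
  piece_interval : ∀ i, ∃ c d : ℝ, piece i = Set.Ioo c d ∩ Set.Icc a b
  piece_disjoint : ∀ i j, i ≠ j → Disjoint (piece i) (piece j)
  cover : Set.Icc a b = ⋃ i, closure (piece i)
  mapsTo : Set.MapsTo f (Set.Icc a b) (Set.Icc a b)
  contract : ∀ i, ∀ x ∈ piece i, ∀ y ∈ piece i, |f x - f y| ≤ lam * |x - y|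

namespace PCIM

variable (P : PCIM)

/-- The underlying compact interval `X`. -/
def X : Set ℝ := Set.Icc P.a P.b

/-- `X* = ⋃ i, X_i`, the union of the contraction pieces. -/
def Xstar : Set ℝ := ⋃ i, P.piece i

/-- `Δ = X \ X*`, the set of boundaries of the contraction pieces. -/
def Delta : Set ℝ := P.X \ P.Xstar

/-- `X̃ = ⋂_{j ≥ 0} f⁻ʲ(X*)`, the points all of whose iterates are well defined. -/
def Xtilde : Set ℝ := ⋂ j : ℕ, (P.f^[j]) ⁻¹' P.Xstar

/-- `D`: the set of one-sided limits of `f` at the points of `Δ`. -/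
def D : Set ℝ :=
  {L | ∃ c ∈ P.Delta,
    ((𝓝[P.X ∩ Set.Iio c] c).NeBot ∧ Filter.Tendsto P.f (𝓝[P.X ∩ Set.Iio c] c) (𝓝 L)) ∨
    ((𝓝[P.X ∩ Set.Ioi c] c).NeBot ∧ Filter.Tendsto P.f (𝓝[P.X ∩ Set.Ioi c] c) (𝓝 L))}

/-- A set `A` is `f`-pseudo-invariant if for every `x ∈ A` at least one of the
one-sided limits of `f` at `x` belongs to `A`. -/
def PseudoInvariant (A : Set ℝ) : Prop :=
  ∀ x ∈ A,
    (∃ L ∈ A, (𝓝[P.X ∩ Set.Iio x] x).NeBot ∧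
      Filter.Tendsto P.f (𝓝[P.X ∩ Set.Iio x] x) (𝓝 L)) ∨
    (∃ L ∈ A, (𝓝[P.X ∩ Set.Ioi x] x).NeBot ∧
      Filter.Tendsto P.f (𝓝[P.X ∩ Set.Ioi x] x) (𝓝 L))

/-- `f` is piecewise monotonic: strictly monotone on each contraction piece. -/
def PiecewiseMonotonic : Prop :=
  ∀ i, StrictMonoOn P.f (P.piece i) ∨ StrictAntiOn P.f (P.piece i)

/-- `f` satisfies the separation property: it is piecewise monotonic and the closures
of the images of distinct pieces are disjoint. -/
def SeparationProperty : Prop :=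
  P.PiecewiseMonotonic ∧
    ∀ i j, i ≠ j → closure (P.f '' P.piece i) ∩ closure (P.f '' P.piece j) = ∅

/-- The iterates `Λ_n` defining the attractor: `Λ_0 = X`,
`Λ_{n+1} = cl (f (Λ_n \ Δ))`. -/
def LambdaIter : (P : PCIM) → ℕ → Set ℝ
  | Q, 0 => Q.X
  | Q, n + 1 => closure (Q.f '' (LambdaIter Q n \ Q.Delta))

/-- The attractor `Λ = ⋂_{n ≥ 1} Λ_n`. -/
def Lambda : Set ℝ := ⋂ n : ℕ, P.LambdaIter (n + 1)

/-- The atom associated to the word `w = [i₁, …, iₙ]`: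
`A_{i₁…iₙ} = F_{iₙ} ∘ ⋯ ∘ F_{i₁}(X)` where `F_i(A) = cl (f (A ∩ X_i))`. -/
def atomOf (w : List (Fin P.N)) : Set ℝ :=
  w.foldl (fun A i => closure (P.f '' (A ∩ P.piece i))) P.X

/-- `𝒜_n`: the set of (nonempty) atoms of generation `n`. -/
def atoms (n : ℕ) : Set (Set ℝ) :=
  {A | ∃ w : List (Fin P.N), w.length = n ∧ P.atomOf w = A ∧ A.Nonempty}

/-- `θ` is the itinerary of `x`: `f^t(x) ∈ X_{θ_t}` for all `t`. -/
def IsItinerary (x : ℝ) (θ : ℕ → Fin P.N) : Prop :=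
  ∀ t : ℕ, P.f^[t] x ∈ P.piece (θ t)

/-- The word `θ_t θ_{t+1} … θ_{t+n-1}` of length `n` of the sequence `θ`. -/
def word (θ : ℕ → Fin P.N) (t n : ℕ) : List (Fin P.N) :=
  (List.range n).map fun k => θ (t + k)

/-- `L_n(θ)`: the set of words of length `n` occurring in `θ`. -/
def lang (θ : ℕ → Fin P.N) (n : ℕ) : Set (List (Fin P.N)) :=
  {w | ∃ t : ℕ, w = P.word θ t n}

/-- The complexity function `p_θ(n) = #L_n(θ)`. -/
noncomputable def complexity (θ : ℕ → Fin P.N) (n : ℕ) : ℕ := (P.lang θ n).ncard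

/-- The forward orbit of `x` under `f`. -/
def orbit (x : ℝ) : Set ℝ := {y | ∃ k : ℕ, P.f^[k] x = y}

/-- The ω-limit set of `x` under `f`. -/
def omegaLimitSet (x : ℝ) : Set ℝ :=
  ⋂ n : ℕ, closure {y | ∃ m : ℕ, n ≤ m ∧ P.f^[m] x = y}

/-- A compact pseudo-invariant set `A` is `X̃`-minimal if the orbit of every point
of `A ∩ X̃` is dense in `A`. -/
def XtildeMinimal (A : Set ℝ) : Prop :=
  IsCompact A ∧ P.PseudoInvariant A ∧ ∀ x ∈ A ∩ P.Xtilde, A ⊆ closure (P.orbit x)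

/-- A periodic orbit contained in `X̃`. -/
def IsPeriodicOrbit (A : Set ℝ) : Prop :=
  ∃ x ∈ P.Xtilde, ∃ p : ℕ, 1 ≤ p ∧ P.f^[p] x = x ∧ A = P.orbit x

end PCIM

/-- A Cantor set: nonempty, compact, perfect and totally disconnected. -/
def IsCantorSet (A : Set ℝ) : Prop :=
  A.Nonempty ∧ IsCompact A ∧ Perfect A ∧ IsTotallyDisconnected A

/-!
Under the separation property two atoms of the same generation are equal or disjoint: `F_i`
sends disjoint compact sets to disjoint sets because `f` is strictly monotone on `X_i`, and
`F_i`, `F_j` have disjoint ranges for `i ≠ j`. Atoms are intervals, and every atom of generation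
`n + 1` is `F_i B` for an atom `B` of generation `n` meeting `X_i`. Counting the pairs `(B, i)`
with `B` meeting `X_i`: each `B` has one leftmost piece it meets; a piece `X_i` that `B` meets to
the right of another piece determines `B`, since two disjoint intervals cannot both reach into
`X_i` from the left of it; and this never happens for the leftmost piece of `X`. So there are at
most `#𝒜_n + N - 1` such pairs.
-/

open Function

section IntervalFamilies

variable {α ι : Type*} [LinearOrder α]

theorem Set.OrdConnected.lt_of_disjoint {S T : Set α} (hS : S.OrdConnected)
    (hT : T.OrdConnected) (hST : Disjoint S T) {s t s' t' : α} (hs : s ∈ S) (ht : t ∈ T)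
    (hst : s < t) (hs' : s' ∈ S) (ht' : t' ∈ T) : s' < t' := by
  by_contra! h
  rcases le_or_gt t' s with h' | h'
  · exact hST.ne_of_mem hs (hT.out ht' ht ⟨h', hst.le⟩) rfl
  · exact hST.ne_of_mem (hS.out hs hs' ⟨h'.le, h⟩) ht' rfl

def MeetsEarlierPiece (X : ι → Set α) (B : Set α) (i : ι) : Prop :=
  ∃ j ≠ i, ∃ u ∈ B ∩ X j, ∃ v ∈ B ∩ X i, u < v

variable {X : ι → Set α}

theorem meetsEarlierPiece_or_meetsEarlierPiece (hXd : Pairwise (Disjoint on X)) {B : Set α}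
    {i i' : ι} (hii' : i ≠ i') {v v' : α} (hv : v ∈ B ∩ X i) (hv' : v' ∈ B ∩ X i') :
    MeetsEarlierPiece X B i ∨ MeetsEarlierPiece X B i' := by
  rcases lt_or_gt_of_ne ((hXd hii').ne_of_mem hv.2 hv'.2) with h | h
  · exact Or.inr ⟨i, hii', v, hv, v', hv', h⟩
  · exact Or.inl ⟨i', hii'.symm, v', hv', v, hv, h⟩

theorem eq_of_meetsEarlierPiece {𝒮 : Set (Set α)} (h𝒮c : ∀ B ∈ 𝒮, B.OrdConnected)
    (h𝒮d : 𝒮.PairwiseDisjoint id) (hXc : ∀ i, (X i).OrdConnected)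
    (hXd : Pairwise (Disjoint on X)) {B B' : Set α} (hB : B ∈ 𝒮) (hB' : B' ∈ 𝒮) {i : ι}
    (h : MeetsEarlierPiece X B i) (h' : MeetsEarlierPiece X B' i) : B = B' := by
  by_contra hne
  have hd : Disjoint B B' := h𝒮d hB hB' hne
  obtain ⟨j, hji, u, hu, v, hv, huv⟩ := h
  obtain ⟨j', hji', u', hu', v', hv', huv'⟩ := h'
  rcases lt_or_gt_of_ne (hd.ne_of_mem hv.1 hv'.1) with hlt | hlt
  · have hvu' : v < u' :=
      (h𝒮c B hB).lt_of_disjoint (h𝒮c B' hB') hd hv.1 hv'.1 hlt hv.1 hu'.1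
    exact (hXd hji').ne_of_mem hu'.2 ((hXc i).out hv.2 hv'.2 ⟨hvu'.le, huv'.le⟩) rfl
  · have hv'u : v' < u :=
      (h𝒮c B' hB').lt_of_disjoint (h𝒮c B hB) hd.symm hv'.1 hv.1 hlt hv'.1 hu.1
    exact (hXd hji).ne_of_mem hu.2 ((hXc i).out hv'.2 hv.2 ⟨hv'u.le, huv.le⟩) rfl

theorem exists_forall_not_meetsEarlierPiece [Finite ι] [Nonempty ι]
    (hXc : ∀ i, (X i).OrdConnected) (hXd : Pairwise (Disjoint on X)) (hXne : ∀ i, (X i).Nonempty) :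
    ∃ k, ∀ B, ¬ MeetsEarlierPiece X B k := by
  choose p hp using hXne
  obtain ⟨k, hk⟩ := Finite.exists_min p
  refine ⟨k, fun B ⟨j, hjk, u, hu, v, hv, huv⟩ => ?_⟩
  have hpk : p k < p j := (hk j).lt_of_ne ((hXd hjk.symm).ne_of_mem (hp k) (hp j))
  exact huv.not_gt ((hXc k).lt_of_disjoint (hXc j) (hXd hjk.symm) (hp k) (hp j) hpk hv.2 hu.2)

theorem ncard_pairs_inter_nonempty_le [Fintype ι] [Nonempty ι] {𝒮 : Set (Set α)}
    (h𝒮 : 𝒮.Finite) (h𝒮c : ∀ B ∈ 𝒮, B.OrdConnected) (h𝒮d : 𝒮.PairwiseDisjoint id)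
    (hXc : ∀ i, (X i).OrdConnected) (hXd : Pairwise (Disjoint on X))
    (hXne : ∀ i, (X i).Nonempty) :
    {p : Set α × ι | p.1 ∈ 𝒮 ∧ (p.1 ∩ X p.2).Nonempty}.ncard ≤
      𝒮.ncard + (Fintype.card ι - 1) := by
  set pairs := {p : Set α × ι | p.1 ∈ 𝒮 ∧ (p.1 ∩ X p.2).Nonempty}
  set meetsEarlier := {p : Set α × ι | MeetsEarlierPiece X p.1 p.2}
  obtain ⟨k, hk⟩ := exists_forall_not_meetsEarlierPiece hXc hXd hXne
  have hfst : (pairs \ meetsEarlier).ncard ≤ 𝒮.ncard := by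
    refine Set.ncard_le_ncard_of_injOn Prod.fst (fun p hp => hp.1.1) ?_ h𝒮
    rintro ⟨B, i⟩ ⟨⟨-, v, hv⟩, hi⟩ ⟨B', i'⟩ ⟨⟨-, v', hv'⟩, hi'⟩ (rfl : B = B')
    by_contra hii'
    exact (meetsEarlierPiece_or_meetsEarlierPiece hXd (fun h => hii' (congrArg _ h)) hv
      hv').elim hi hi'
  have hsnd : (pairs ∩ meetsEarlier).ncard ≤ ({k}ᶜ : Set ι).ncard := by
    refine Set.ncard_le_ncard_of_injOn Prod.snd (fun p hp h => hk p.1 (h ▸ hp.2)) ?_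
    rintro ⟨B, i⟩ ⟨hB, hi⟩ ⟨B', i'⟩ ⟨hB', hi'⟩ (rfl : i = i')
    exact congrArg (·, i) (eq_of_meetsEarlierPiece h𝒮c h𝒮d hXc hXd hB.1 hB'.1 hi hi')
  calc pairs.ncard ≤ (pairs \ meetsEarlier).ncard + (pairs ∩ meetsEarlier).ncard := by
        conv_lhs => rw [← Set.sdiff_union_inter pairs meetsEarlier]
        exact Set.ncard_union_le _ _
    _ ≤ 𝒮.ncard + (Fintype.card ι - 1) := by
        rw [Set.ncard_compl, Set.ncard_singleton, Nat.card_eq_fintype_card] at hsnd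
        omega

end IntervalFamilies

section StrictMonoOnClosure

variable {α β : Type*} [TopologicalSpace α] [TopologicalSpace β]

theorem exists_seq_tendsto_of_mem_closure_image [FirstCountableTopology α]
    [FrechetUrysohnSpace β] {f : α → β} {S B : Set α} (hB : IsCompact B) (hSB : S ⊆ B) {z : β}
    (hz : z ∈ closure (f '' S)) :
    ∃ x ∈ B, ∃ s : ℕ → α, (∀ n, s n ∈ S) ∧ Tendsto s atTop (𝓝 x) ∧
      Tendsto (f ∘ s) atTop (𝓝 z) := by
  obtain ⟨y, hy, hyz⟩ := mem_closure_iff_seq_limit.mp hz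
  choose s hs hfs using hy
  obtain ⟨x, hx, φ, hφ, hsx⟩ := hB.tendsto_subseq fun n => hSB (hs n)
  refine ⟨x, hx, s ∘ φ, fun n => hs (φ n), hsx, ?_⟩
  simpa only [comp_def, hfs] using hyz.comp hφ.tendsto_atTop

variable [LinearOrder α] [OrderTopology α] [DenselyOrdered α] [LinearOrder β]
  [OrderClosedTopology β]

theorem ne_of_tendsto_comp_of_strictMonoOn {f : α → β} {T : Set α} (hT : T.OrdConnected)
    (hf : StrictMonoOn f T ∨ StrictAntiOn f T) {s t : ℕ → α} (hs : ∀ n, s n ∈ T)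
    (ht : ∀ n, t n ∈ T) {x y : α} {z z' : β} (hxy : x < y) (hsx : Tendsto s atTop (𝓝 x))
    (hty : Tendsto t atTop (𝓝 y)) (hfs : Tendsto (f ∘ s) atTop (𝓝 z))
    (hft : Tendsto (f ∘ t) atTop (𝓝 z')) : z ≠ z' := by
  obtain ⟨p, hxp, hpy⟩ := exists_between hxy
  obtain ⟨q, hpq, hqy⟩ := exists_between hpy
  have hs_lt : ∀ᶠ n in atTop, s n < p := hsx.eventually_lt_const hxp
  have ht_gt : ∀ᶠ n in atTop, q < t n := hty.eventually_const_lt hqy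
  obtain ⟨m, hsm, htm⟩ := (hs_lt.and ht_gt).exists
  have hp : p ∈ T := hT.out (hs m) (ht m) ⟨hsm.le, hpq.le.trans htm.le⟩
  have hq : q ∈ T := hT.out (hs m) (ht m) ⟨hsm.le.trans hpq.le, htm.le⟩
  rcases hf with hf | hf
  · have hzp : z ≤ f p := le_of_tendsto hfs (hs_lt.mono fun n hn => (hf (hs n) hp hn).le)
    have hqz : f q ≤ z' := ge_of_tendsto hft (ht_gt.mono fun n hn => (hf hq (ht n) hn).le)
    exact (hzp.trans_lt ((hf hp hq hpq).trans_le hqz)).ne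
  · have hpz : f p ≤ z := ge_of_tendsto hfs (hs_lt.mono fun n hn => (hf (hs n) hp hn).le)
    have hzq : z' ≤ f q := le_of_tendsto hft (ht_gt.mono fun n hn => (hf hq (ht n) hn).le)
    exact (hzq.trans_lt ((hf hp hq hpq).trans_le hpz)).ne'

theorem disjoint_closure_image_inter [FirstCountableTopology α] [FrechetUrysohnSpace β]
    {f : α → β} {T B B' : Set α} (hT : T.OrdConnected) (hf : StrictMonoOn f T ∨ StrictAntiOn f T)
    (hB : IsCompact B) (hB' : IsCompact B') (hd : Disjoint B B') :
    Disjoint (closure (f '' (B ∩ T))) (closure (f '' (B' ∩ T))) := by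
  rw [Set.disjoint_left]
  intro z hz hz'
  obtain ⟨x, hx, s, hs, hsx, hfs⟩ :=
    exists_seq_tendsto_of_mem_closure_image hB inter_subset_left hz
  obtain ⟨y, hy, t, ht, hty, hft⟩ :=
    exists_seq_tendsto_of_mem_closure_image hB' inter_subset_left hz'
  rcases lt_or_gt_of_ne (hd.ne_of_mem hx hy) with hxy | hxy
  · exact ne_of_tendsto_comp_of_strictMonoOn hT hf (fun n => (hs n).2) (fun n => (ht n).2)
      hxy hsx hty hfs hft rfl
  · exact ne_of_tendsto_comp_of_strictMonoOn hT hf (fun n => (ht n).2) (fun n => (hs n).2)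
      hxy hty hsx hft hfs rfl

end StrictMonoOnClosure

namespace PCIM

variable (P : PCIM)

def F (i : Fin P.N) (A : Set ℝ) : Set ℝ := closure (P.f '' (A ∩ P.piece i))

theorem atomOf_append (w : List (Fin P.N)) (i : Fin P.N) :
    P.atomOf (w ++ [i]) = P.F i (P.atomOf w) := by
  simp [atomOf, F]

theorem atomOf_induction {Q : Set ℝ → Prop} (hX : Q P.X) (hF : ∀ i A, Q A → Q (P.F i A))
    (w : List (Fin P.N)) : Q (P.atomOf w) := by
  induction w using List.reverseRecOn with
  | nil => exact hX
  | append_singleton w i ih => rw [atomOf_append]; exact hF i _ ih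

theorem piece_subset_X (i : Fin P.N) : P.piece i ⊆ P.X := by
  obtain ⟨c, d, h⟩ := P.piece_interval i
  exact h ▸ inter_subset_right

theorem ordConnected_piece (i : Fin P.N) : (P.piece i).OrdConnected := by
  obtain ⟨c, d, h⟩ := P.piece_interval i
  exact h ▸ ordConnected_Ioo.inter ordConnected_Icc

theorem continuousOn_piece (i : Fin P.N) : ContinuousOn P.f (P.piece i) := by
  refine (LipschitzOnWith.of_dist_le_mul (K := P.lam.toNNReal) fun x hx y hy => ?_).continuousOn
  rw [Real.dist_eq, Real.dist_eq, Real.coe_toNNReal _ P.hlam₀.le]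
  exact P.contract i x hx y hy

theorem F_subset_X (i : Fin P.N) (A : Set ℝ) : P.F i A ⊆ P.X :=
  closure_minimal (image_subset_iff.mpr fun _ hx => P.mapsTo (P.piece_subset_X i hx.2))
    isClosed_Icc

theorem isCompact_atomOf (w : List (Fin P.N)) : IsCompact (P.atomOf w) :=
  P.atomOf_induction isCompact_Icc
    (fun i A _ => isCompact_Icc.of_isClosed_subset isClosed_closure (P.F_subset_X i A)) w

theorem ordConnected_atomOf (w : List (Fin P.N)) : (P.atomOf w).OrdConnected :=
  P.atomOf_induction ordConnected_Icc (fun i _ hA =>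
    ((hA.inter (P.ordConnected_piece i)).isPreconnected.image P.f
      ((P.continuousOn_piece i).mono inter_subset_right)).closure.ordConnected) w

variable {P}

theorem atomOf_eq_or_disjoint (hsep : P.SeparationProperty) {w w' : List (Fin P.N)}
    (hlen : w.length = w'.length) :
    P.atomOf w = P.atomOf w' ∨ Disjoint (P.atomOf w) (P.atomOf w') := by
  induction w using List.reverseRecOn generalizing w' with
  | nil => exact Or.inl (by rw [List.eq_nil_of_length_eq_zero hlen.symm])
  | append_singleton w i ih =>
    rcases w'.eq_nil_or_concat' with rfl | ⟨w', j, rfl⟩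
    · simp at hlen
    simp only [List.length_append, List.length_singleton, Nat.add_right_cancel_iff] at hlen
    rw [atomOf_append, atomOf_append]
    by_cases hij : i = j
    · subst hij
      refine (ih hlen).imp (congrArg _) fun hd => ?_
      exact disjoint_closure_image_inter (P.ordConnected_piece i) (hsep.1 i)
        (P.isCompact_atomOf w) (P.isCompact_atomOf w') hd
    · right
      exact (Set.disjoint_iff_inter_eq_empty.mpr (hsep.2 i j hij)).mono
        (closure_mono (image_mono inter_subset_right))
        (closure_mono (image_mono inter_subset_right))

theorem pairwiseDisjoint_atoms (hsep : P.SeparationProperty) (n : ℕ) :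
    (P.atoms n).PairwiseDisjoint id := by
  rintro _ ⟨w, hw, rfl, -⟩ _ ⟨w', hw', rfl, -⟩ hne
  exact (atomOf_eq_or_disjoint hsep (hw.trans hw'.symm)).resolve_left hne

variable (P)

theorem atoms_finite (n : ℕ) : (P.atoms n).Finite :=
  ((List.finite_length_eq (Fin P.N) n).image P.atomOf).subset
    fun _ ⟨w, hw, hA, _⟩ => ⟨w, hw, hA⟩

theorem ordConnected_of_mem_atoms {n : ℕ} {A : Set ℝ} (hA : A ∈ P.atoms n) :
    A.OrdConnected := by
  obtain ⟨w, -, rfl, -⟩ := hA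
  exact P.ordConnected_atomOf w

theorem atoms_succ_subset (n : ℕ) :
    P.atoms (n + 1) ⊆ (fun p => P.F p.2 p.1) ''
      {p : Set ℝ × Fin P.N | p.1 ∈ P.atoms n ∧ (p.1 ∩ P.piece p.2).Nonempty} := by
  rintro _ ⟨w, hw, rfl, hne⟩
  rcases w.eq_nil_or_concat' with rfl | ⟨w, i, rfl⟩
  · simp at hw
  rw [atomOf_append] at hne ⊢
  have hmeet : (P.atomOf w ∩ P.piece i).Nonempty := by
    simpa only [F, closure_nonempty_iff, image_nonempty] using hne
  exact ⟨(P.atomOf w, i),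
    ⟨⟨w, by simpa using hw, rfl, hmeet.mono inter_subset_left⟩, hmeet⟩, rfl⟩

variable {P}

theorem ncard_atoms_succ_le (hsep : P.SeparationProperty) (n : ℕ) :
    (P.atoms (n + 1)).ncard ≤ (P.atoms n).ncard + (P.N - 1) := by
  have : Nonempty (Fin P.N) := ⟨⟨0, P.hN⟩⟩
  set pairs := {p : Set ℝ × Fin P.N | p.1 ∈ P.atoms n ∧ (p.1 ∩ P.piece p.2).Nonempty}
  have hfin : pairs.Finite :=
    ((P.atoms_finite n).prod Set.finite_univ).subset fun p hp => ⟨hp.1, trivial⟩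
  calc (P.atoms (n + 1)).ncard ≤ ((fun p => P.F p.2 p.1) '' pairs).ncard :=
        Set.ncard_le_ncard (P.atoms_succ_subset n) (hfin.image _)
    _ ≤ pairs.ncard := Set.ncard_image_le hfin
    _ ≤ (P.atoms n).ncard + (Fintype.card (Fin P.N) - 1) :=
        ncard_pairs_inter_nonempty_le (P.atoms_finite n) (fun _ => P.ordConnected_of_mem_atoms)
          (pairwiseDisjoint_atoms hsep n) P.ordConnected_piece P.piece_disjoint
          P.piece_nonempty
    _ = (P.atoms n).ncard + (P.N - 1) := by rw [Fintype.card_fin]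

theorem ncard_atoms_add_le (hsep : P.SeparationProperty) (n m : ℕ) :
    (P.atoms (n + m)).ncard ≤ (P.atoms n).ncard + m * (P.N - 1) := by
  induction m with
  | zero => simp
  | succ m ih =>
    calc (P.atoms (n + m + 1)).ncard ≤ (P.atoms (n + m)).ncard + (P.N - 1) :=
          ncard_atoms_succ_le hsep (n + m)
      _ ≤ (P.atoms n).ncard + (m + 1) * (P.N - 1) := by rw [add_one_mul]; omega

end PCIM

theorem card_atoms_growth_general (P : PCIM)
    (hsep : P.SeparationProperty)
    (n₀ : ℕ) :
    ∀ n : ℕ, 1 ≤ n →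
      (P.atoms (n + n₀)).ncard - (P.atoms n₀).ncard ≤ n * (P.N - 1) := by
  intro n _
  have := P.ncard_atoms_add_le hsep n₀ n
  rw [add_comm]
  omega

/-- Under the separation property and `D ⊆ X̃`, if every atom of
generation at least `n₀` contains at most one point of `Δ`, then
`#𝒜_{n+n₀} - #𝒜_{n₀} ≤ n (N - 1)` for every `n ≥ 1`. -/
theorem card_atoms_growth (P : PCIM)
    (hsep : P.SeparationProperty) (hD : P.D ⊆ P.Xtilde)
    (n₀ : ℕ) (hn₀ : 1 ≤ n₀)
    (hatom : ∀ n : ℕ, n₀ ≤ n → ∀ A ∈ P.atoms n, (A ∩ P.Delta).Subsingleton) :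
    ∀ n : ℕ, 1 ≤ n →
      (P.atoms (n + n₀)).ncard - (P.atoms n₀).ncard ≤ n * (P.N - 1) :=
  card_atoms_growth_general P hsep n₀
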